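/- arXiv:2401.14055 — 3 statements merged into one kernel-verified Lean document; each statement's English description precedes it below -/
import Mathlib

section
/- Let δ, γ : ℕ → ℝ satisfy 0 ≤ δ n, 0 ≤ γ n, and δ n + γ n < 1 for all n. Define S : ℕ → ℝ by S x = Σ_{y<x} γ y · Π_{z<y} δ z, and define e : ℕ → ℝ recursively by e 0 = 1 and e (x+1) = e x · δ x / (1 − γ x · e x). Then for every x ∈ ℕ: (i) 1 − S x > 0; (ii) 0 ≤ e x ≤ 1; (iii) 1 − γ x · e x > 0 (so the recursion is well defined); and (iv) e x = (Π_{z<x} δ z)/(1 − S x). -/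
/-!
Write `P x = ∏_{z<x} δ z` and `Q x = 1 - ∑_{y<x} γ y · P y`, so that `P (x+1) = P x · δ x` and
`Q (x+1) = Q x - γ x · P x`. If `e x = P x / Q x`, then `1 - γ x · e x = Q (x+1) / Q x`, and the
recursion gives `e (x+1) = P (x+1) / Q (x+1)`. The recursion is well defined because
`0 ≤ P x ≤ Q x` and `0 < Q x` hold by induction: `Q (x+1) ≥ (1 - γ x) · Q x > 0` and
`P (x+1) = (δ x + γ x) · P x - γ x · P x ≤ Q x - γ x · P x = Q (x+1)`.
-/

open Finset

namespace DeterioratingMachine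

variable {K : Type*}

/-- The discounted weight of reaching `x` from `0` by deterioration steps only. -/
def deteriorationWeight [CommMonoid K] (δ : ℕ → K) (x : ℕ) : K :=
  ∏ z ∈ range x, δ z

/-- The discounted weight of failing (returning to `0`) before reaching `x`. -/
def failureWeight [CommSemiring K] (δ γ : ℕ → K) (x : ℕ) : K :=
  ∑ y ∈ range x, γ y * deteriorationWeight δ y

@[simp]
theorem deteriorationWeight_zero [CommMonoid K] (δ : ℕ → K) : deteriorationWeight δ 0 = 1 :=
  prod_range_zero δ

theorem deteriorationWeight_succ [CommMonoid K] (δ : ℕ → K) (n : ℕ) :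
    deteriorationWeight δ (n + 1) = deteriorationWeight δ n * δ n :=
  prod_range_succ δ n

@[simp]
theorem failureWeight_zero [CommSemiring K] (δ γ : ℕ → K) : failureWeight δ γ 0 = 0 :=
  sum_range_zero _

theorem failureWeight_succ [CommSemiring K] (δ γ : ℕ → K) (n : ℕ) :
    failureWeight δ γ (n + 1) = failureWeight δ γ n + γ n * deteriorationWeight δ n :=
  sum_range_succ _ n

theorem eq_deteriorationWeight_div [Field K] (δ γ e : ℕ → K)
    (hQ : ∀ x, 1 - failureWeight δ γ x ≠ 0) (he0 : e 0 = 1)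
    (heS : ∀ x, e (x + 1) = e x * δ x / (1 - γ x * e x)) (x : ℕ) :
    e x = deteriorationWeight δ x / (1 - failureWeight δ γ x) := by
  induction x with
  | zero => simp [he0]
  | succ n ih =>
    have hQn := hQ n
    have hQsucc := hQ (n + 1)
    rw [failureWeight_succ] at hQsucc
    rw [heS, ih, deteriorationWeight_succ, failureWeight_succ]
    field_simp
    ring

section Ordered

variable [Field K] [LinearOrder K] [IsStrictOrderedRing K] {δ γ : ℕ → K}

theorem deteriorationWeight_nonneg (hδ : ∀ n, 0 ≤ δ n) (x : ℕ) : 0 ≤ deteriorationWeight δ x :=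
  prod_nonneg fun z _ => hδ z

theorem one_sub_failureWeight_pos_and_deteriorationWeight_le
    (hδ : ∀ n, 0 ≤ δ n) (hγ : ∀ n, 0 ≤ γ n) (hsum : ∀ n, δ n + γ n < 1) (x : ℕ) :
    0 < 1 - failureWeight δ γ x ∧ deteriorationWeight δ x ≤ 1 - failureWeight δ γ x := by
  induction x with
  | zero => simp
  | succ n ih =>
    obtain ⟨hQ, hPQ⟩ := ih
    have hP := deteriorationWeight_nonneg hδ n
    have hδn := hδ n
    have hγn := hγ n
    have hsumn := hsum n
    rw [failureWeight_succ, deteriorationWeight_succ]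
    constructor <;> nlinarith

end Ordered

end DeterioratingMachine

open DeterioratingMachine

open Finset in
/-- Closed form for the expected discount factor `e x = E[β^{τ(0,x)}]`:
with `S x = Σ_{y<x} γ y · Π_{z<y} δ z` and `e` defined by the recursion
`e 0 = 1`, `e (x+1) = e x · δ x / (1 − γ x · e x)`, one has, for all `x`:
`1 − S x > 0`, `0 ≤ e x ≤ 1`, `1 − γ x · e x > 0`, and
`e x = (Π_{z<x} δ z)/(1 − S x)`. -/
theorem stmt_5 (δ γ : ℕ → ℝ) (hδ : ∀ n, 0 ≤ δ n) (hγ : ∀ n, 0 ≤ γ n)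
    (hsum : ∀ n, δ n + γ n < 1)
    (e : ℕ → ℝ) (he0 : e 0 = 1)
    (heS : ∀ x, e (x + 1) = e x * δ x / (1 - γ x * e x)) :
    ∀ x : ℕ,
      0 < 1 - ∑ y ∈ range x, γ y * ∏ z ∈ range y, δ z ∧
      (0 ≤ e x ∧ e x ≤ 1) ∧
      0 < 1 - γ x * e x ∧
      e x = (∏ z ∈ range x, δ z) /
        (1 - ∑ y ∈ range x, γ y * ∏ z ∈ range y, δ z) := by
  intro x
  have hbounds := one_sub_failureWeight_pos_and_deteriorationWeight_le hδ hγ hsum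
  obtain ⟨hQ, hPQ⟩ := hbounds x
  have hclosed : e x = deteriorationWeight δ x / (1 - failureWeight δ γ x) :=
    eq_deteriorationWeight_div δ γ e (fun y => (hbounds y).1.ne') he0 heS x
  have he_nonneg : 0 ≤ e x := hclosed ▸ div_nonneg (deteriorationWeight_nonneg hδ x) hQ.le
  have he_le_one : e x ≤ 1 := hclosed ▸ div_le_one_of_le₀ hPQ hQ.le
  have hγe : γ x * e x ≤ γ x := mul_le_of_le_one_right (hγ x) he_le_one
  have hγ_lt_one : γ x < 1 := by linarith [hδ x, hsum x]
  exact ⟨hQ, ⟨he_nonneg, he_le_one⟩, by linarith, hclosed⟩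
end

section
/- Let δ, γ : ℕ → ℝ satisfy 0 < δ n, 0 ≤ γ n, and δ n + γ n < 1 for all n. Define S : ℕ → ℝ by S x = Σ_{y<x} γ y · Π_{z<y} δ z and e : ℕ → ℝ by e 0 = 1, e (x+1) = e x · δ x / (1 − γ x · e x). Then for all y ≤ x: Π_{h=y}^{x−1} ( δ h / (1 − γ h · e h) ) = ( Π_{h=y}^{x−1} δ h ) · (1 − S y)/(1 − S x). -/
/-!
Write `P x = ∏_{z<x} δ z` and `T x = 1 - ∑_{i<x} γ i P i`. By induction, `e x = P x / T x`, since
the recursion for `e` becomes `T (x + 1) = T x - γ x P x`. Telescoping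
`1 - P x = ∑_{i<x} P i (1 - δ i)` gives `T x - P x = ∑_{i<x} P i (1 - δ i - γ i) ≥ 0`, so `T x ≥ P x > 0`
and no division by zero occurs. Each factor `δ h / (1 - γ h e h)` is then `δ h · T h / T (h + 1)`,
and the product of the ratios `T h / T (h + 1)` over `[y, x)` telescopes to `T y / T x`.
-/

open Finset

namespace DeterioratingMachine

variable (δ γ : ℕ → ℝ)

/-- `1 - S x` in the paper's notation. -/
def survivalMass (x : ℕ) : ℝ :=
  1 - ∑ i ∈ range x, γ i * ∏ z ∈ range i, δ z

lemma survivalMass_succ (x : ℕ) :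
    survivalMass δ γ (x + 1) = survivalMass δ γ x - γ x * ∏ z ∈ range x, δ z := by
  rw [survivalMass, survivalMass, sum_range_succ]
  ring

lemma one_sub_prod_range (x : ℕ) :
    1 - ∏ z ∈ range x, δ z = ∑ i ∈ range x, (∏ z ∈ range i, δ z) * (1 - δ i) := by
  induction x with
  | zero => simp
  | succ n ih =>
    rw [sum_range_succ, ← ih, prod_range_succ]
    ring

lemma survivalMass_sub_prod_range (x : ℕ) :
    survivalMass δ γ x - ∏ z ∈ range x, δ z =
      ∑ i ∈ range x, (∏ z ∈ range i, δ z) * (1 - δ i - γ i) := by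
  have h := one_sub_prod_range δ x
  simp only [survivalMass, mul_sub, sum_sub_distrib] at h ⊢
  rw [← h]
  simp only [mul_comm]
  ring

variable {δ γ}

lemma prod_range_le_survivalMass (hδ : ∀ n, 0 ≤ δ n) (hsum : ∀ n, δ n + γ n ≤ 1) (x : ℕ) :
    ∏ z ∈ range x, δ z ≤ survivalMass δ γ x := by
  rw [← sub_nonneg, survivalMass_sub_prod_range]
  exact sum_nonneg fun i _ =>
    mul_nonneg (prod_nonneg fun z _ => hδ z) (by linarith [hsum i])

lemma survivalMass_pos (hδ : ∀ n, 0 < δ n) (hsum : ∀ n, δ n + γ n ≤ 1) (x : ℕ) :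
    0 < survivalMass δ γ x :=
  (prod_pos fun z _ => hδ z).trans_le
    (prod_range_le_survivalMass (fun n => (hδ n).le) hsum x)

lemma eq_prod_range_div_survivalMass {e : ℕ → ℝ} (hT : ∀ n, survivalMass δ γ n ≠ 0)
    (he0 : e 0 = 1) (heS : ∀ x, e (x + 1) = e x * δ x / (1 - γ x * e x)) (x : ℕ) :
    e x = (∏ z ∈ range x, δ z) / survivalMass δ γ x := by
  induction x with
  | zero => simp [he0, survivalMass]
  | succ n ih =>
    have hn := hT n
    rw [heS, ih, survivalMass_succ, prod_range_succ]
    field_simp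

lemma prod_Ico_div_succ_of_ne_zero {K : Type*} [Field K] {f : ℕ → K} (hf : ∀ n, f n ≠ 0) {y x : ℕ} (hyx : y ≤ x) :
    ∏ h ∈ Ico y x, f h / f (h + 1) = f y / f x := by
  induction x, hyx using Nat.le_induction with
  | base => simp [div_self (hf y)]
  | succ n hyn ih =>
    have hn := hf n
    rw [prod_Ico_succ_top hyn, ih]
    field_simp

end DeterioratingMachine

open DeterioratingMachine

open Finset in
theorem stmt_7_general (δ γ : ℕ → ℝ) (hδ : ∀ n, 0 < δ n)
    (hsum : ∀ n, δ n + γ n < 1)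
    (e : ℕ → ℝ) (he0 : e 0 = 1)
    (heS : ∀ x, e (x + 1) = e x * δ x / (1 - γ x * e x)) :
    ∀ x y : ℕ, y ≤ x →
      (∏ h ∈ Ico y x, δ h / (1 - γ h * e h)) =
        (∏ h ∈ Ico y x, δ h) *
          ((1 - ∑ i ∈ range y, γ i * ∏ z ∈ range i, δ z) /
           (1 - ∑ i ∈ range x, γ i * ∏ z ∈ range i, δ z)) := by
  intro x y hyx
  have hT : ∀ n, survivalMass δ γ n ≠ 0 :=
    fun n => (survivalMass_pos hδ (fun n => (hsum n).le) n).ne'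
  have hfactor : ∀ h, δ h / (1 - γ h * e h) =
      δ h * (survivalMass δ γ h / survivalMass δ γ (h + 1)) := by
    intro h
    have hh := hT h
    have hh' := hT (h + 1)
    rw [survivalMass_succ] at hh' ⊢
    rw [eq_prod_range_div_survivalMass hT he0 heS]
    field_simp
  rw [prod_congr rfl fun h _ => hfactor h, prod_mul_distrib,
    prod_Ico_div_succ_of_ne_zero hT hyx]
  rfl

open Finset in
/-- Closed form for `E[β^{τ(y,x)}]`: with `S x = Σ_{y<x} γ y · Π_{z<y} δ z`
and `e` as in the recursion, for all `y ≤ x`,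
`Π_{h=y}^{x−1} (δ h / (1 − γ h · e h)) = (Π_{h=y}^{x−1} δ h) · (1 − S y)/(1 − S x)`. -/
theorem stmt_7 (δ γ : ℕ → ℝ) (hδ : ∀ n, 0 < δ n) (hγ : ∀ n, 0 ≤ γ n)
    (hsum : ∀ n, δ n + γ n < 1)
    (e : ℕ → ℝ) (he0 : e 0 = 1)
    (heS : ∀ x, e (x + 1) = e x * δ x / (1 - γ x * e x)) :
    ∀ x y : ℕ, y ≤ x →
      (∏ h ∈ Ico y x, δ h / (1 - γ h * e h)) =
        (∏ h ∈ Ico y x, δ h) *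
          ((1 - ∑ i ∈ range y, γ i * ∏ z ∈ range i, δ z) /
           (1 - ∑ i ∈ range x, γ i * ∏ z ∈ range i, δ z)) :=
  stmt_7_general δ γ hδ hsum e he0 heS
end

section
/- Let δ, γ, κ : ℕ → ℝ with 0 ≤ δ n, 0 ≤ γ n, δ n + γ n < 1 for all n, and let B ∈ ℝ. Define S x = Σ_{y<x} γ y · Π_{z<y} δ z, e 0 = 1, e (x+1) = e x · δ x/(1 − γ x · e x), and define KK : ℕ → ℝ by KK 0 = 0 and KK (x+1) = KK x + e x · (κ x + γ x · (KK x + B))/(1 − γ x · e x). Then for every x ∈ ℕ: KK x = ( Σ_{y<x} (κ y + γ y · B) · Π_{z<y} δ z ) / (1 − S x). -/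
/-!
Write `P x = ∏_{z<x} δ z`, `S x = Σ_{y<x} γ y P y` and `N x` for the numerator. Since
`δ + γ ≤ 1`, the mass `P x + S x` never exceeds `1`, and then `γ < 1` forces `S x < 1`.
With `S x < 1`, induction gives `e x = P x / (1 - S x)`, so the denominator of both recursions is
`1 - γ x e x = (1 - S (x+1)) / (1 - S x)`, and the recursion for `KK` becomes the one satisfied
by `N x / (1 - S x)`.
-/

open Finset

section Field
variable {K : Type*} [Field K] {S P : K}

lemma one_sub_mul_div_one_sub (hS : 1 - S ≠ 0) (g : K) :
    1 - g * (P / (1 - S)) = (1 - (S + g * P)) / (1 - S) := by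
  field_simp
  ring

lemma div_one_sub_mul_div_one_sub_mul_div (hS : 1 - S ≠ 0) (g d : K) :
    P / (1 - S) * d / (1 - g * (P / (1 - S))) = P * d / (1 - (S + g * P)) := by
  rw [one_sub_mul_div_one_sub hS]
  field_simp

lemma div_add_div_mul_div_one_sub_mul_div (hS : 1 - S ≠ 0) {g : K} (hS' : 1 - (S + g * P) ≠ 0)
    (N k B : K) :
    N / (1 - S) + P / (1 - S) * (k + g * (N / (1 - S) + B)) / (1 - g * (P / (1 - S))) =
      (N + (k + g * B) * P) / (1 - (S + g * P)) := by
  rw [one_sub_mul_div_one_sub hS, eq_div_iff hS', div_div_eq_mul_div, add_mul, div_mul_cancel₀ _ hS']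
  field_simp
  ring

end Field

section
variable {δ γ : ℕ → ℝ}

lemma prod_add_sum_mul_prod_le_one (hδ : ∀ n, 0 ≤ δ n) (hδγ : ∀ n, δ n + γ n ≤ 1) (x : ℕ) :
    ∏ z ∈ range x, δ z + ∑ y ∈ range x, γ y * ∏ z ∈ range y, δ z ≤ 1 := by
  induction x with
  | zero => simp
  | succ n ih =>
    have hP : 0 ≤ ∏ z ∈ range n, δ z := prod_nonneg fun i _ => hδ i
    rw [prod_range_succ, sum_range_succ]
    nlinarith [hδγ n]

lemma sum_mul_prod_lt_one (hδ : ∀ n, 0 ≤ δ n) (hγ : ∀ n, 0 ≤ γ n)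
    (hsum : ∀ n, δ n + γ n < 1) (x : ℕ) :
    ∑ y ∈ range x, γ y * ∏ z ∈ range y, δ z < 1 := by
  induction x with
  | zero => simp
  | succ n ih =>
    have hPS := prod_add_sum_mul_prod_le_one hδ (fun n => (hsum n).le) n
    have hγ1 : 0 < 1 - γ n := by linarith [hδ n, hsum n]
    rw [sum_range_succ]
    -- `P ≤ 1 - S` gives `1 - (S + γ P) ≥ (1 - γ) (1 - S) > 0`
    nlinarith [mul_le_mul_of_nonneg_left (le_sub_iff_add_le.mpr hPS) (hγ n),
      mul_pos (sub_pos.mpr ih) hγ1]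

lemma eq_prod_div_of_rec (hS : ∀ x, ∑ y ∈ range x, γ y * ∏ z ∈ range y, δ z < 1)
    {e : ℕ → ℝ} (he0 : e 0 = 1) (heS : ∀ x, e (x + 1) = e x * δ x / (1 - γ x * e x)) (x : ℕ) :
    e x = (∏ z ∈ range x, δ z) / (1 - ∑ y ∈ range x, γ y * ∏ z ∈ range y, δ z) := by
  induction x with
  | zero => simp [he0]
  | succ n ih =>
    rw [heS, ih, prod_range_succ, sum_range_succ]
    exact div_one_sub_mul_div_one_sub_mul_div (sub_pos.mpr (hS n)).ne' _ _

lemma eq_sum_div_of_rec (hS : ∀ x, ∑ y ∈ range x, γ y * ∏ z ∈ range y, δ z < 1)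
    {κ e KK : ℕ → ℝ} {B : ℝ}
    (he : ∀ x, e x = (∏ z ∈ range x, δ z) / (1 - ∑ y ∈ range x, γ y * ∏ z ∈ range y, δ z))
    (hK0 : KK 0 = 0)
    (hKS : ∀ x, KK (x + 1) = KK x + e x * (κ x + γ x * (KK x + B)) / (1 - γ x * e x)) (x : ℕ) :
    KK x = (∑ y ∈ range x, (κ y + γ y * B) * ∏ z ∈ range y, δ z) /
      (1 - ∑ y ∈ range x, γ y * ∏ z ∈ range y, δ z) := by
  induction x with
  | zero => simp [hK0]
  | succ n ih =>
    have h := (sub_pos.mpr (hS n)).ne'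
    have h' := (sub_pos.mpr (hS (n + 1))).ne'
    rw [sum_range_succ] at h'
    rw [hKS, ih, he, sum_range_succ, sum_range_succ]
    exact div_add_div_mul_div_one_sub_mul_div h h' _ _ _

end

open Finset in
/-- Closed form for the expected discounted operation cost
`KK x = K(0,τ(0,x))`: with `e` and `KK` defined by the given recursions,
`KK x = (Σ_{y<x} (κ y + γ y·B)·Π_{z<y} δ z)/(1 − S x)` for all `x`. -/
theorem stmt_8 (δ γ κ : ℕ → ℝ) (hδ : ∀ n, 0 ≤ δ n) (hγ : ∀ n, 0 ≤ γ n)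
    (hsum : ∀ n, δ n + γ n < 1) (B : ℝ)
    (e : ℕ → ℝ) (he0 : e 0 = 1)
    (heS : ∀ x, e (x + 1) = e x * δ x / (1 - γ x * e x))
    (KK : ℕ → ℝ) (hK0 : KK 0 = 0)
    (hKS : ∀ x, KK (x + 1) =
      KK x + e x * (κ x + γ x * (KK x + B)) / (1 - γ x * e x)) :
    ∀ x : ℕ,
      KK x = (∑ y ∈ range x, (κ y + γ y * B) * ∏ z ∈ range y, δ z) /
        (1 - ∑ y ∈ range x, γ y * ∏ z ∈ range y, δ z) := by
  have hS := sum_mul_prod_lt_one hδ hγ hsum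
  exact eq_sum_div_of_rec hS (eq_prod_div_of_rec hS he0 heS) hK0 hKS
end
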